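/- For every bicomplex number Z, the hyperbolic-valued norm satisfies |Z|_k ≼ √2·|Z| (where the real number √2·|Z| is viewed as a hyperbolic number), and consequently |Z·W|_k ≼ √2·|Z|·|W|_k for all bicomplex W. -/

import Mathlib

@[ext] structure BC where
  z1 : ℂ
  z2 : ℂ

namespace BC

instance : Zero BC := ⟨⟨0, 0⟩⟩
instance : One BC := ⟨⟨1, 0⟩⟩
instance : Add BC := ⟨fun Z W => ⟨Z.z1 + W.z1, Z.z2 + W.z2⟩⟩
instance : Neg BC := ⟨fun Z => ⟨-Z.z1, -Z.z2⟩⟩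
instance : Mul BC := ⟨fun Z W => ⟨Z.z1 * W.z1 - Z.z2 * W.z2, Z.z1 * W.z2 + Z.z2 * W.z1⟩⟩

@[simp] lemma zero_z1 : (0 : BC).z1 = 0 := rfl
@[simp] lemma zero_z2 : (0 : BC).z2 = 0 := rfl
@[simp] lemma one_z1 : (1 : BC).z1 = 1 := rfl
@[simp] lemma one_z2 : (1 : BC).z2 = 0 := rfl
@[simp] lemma add_z1 (Z W : BC) : (Z + W).z1 = Z.z1 + W.z1 := rfl
@[simp] lemma add_z2 (Z W : BC) : (Z + W).z2 = Z.z2 + W.z2 := rfl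
@[simp] lemma neg_z1 (Z : BC) : (-Z).z1 = -Z.z1 := rfl
@[simp] lemma neg_z2 (Z : BC) : (-Z).z2 = -Z.z2 := rfl
@[simp] lemma mul_z1 (Z W : BC) : (Z * W).z1 = Z.z1 * W.z1 - Z.z2 * W.z2 := rfl
@[simp] lemma mul_z2 (Z W : BC) : (Z * W).z2 = Z.z1 * W.z2 + Z.z2 * W.z1 := rfl

instance : CommRing BC where
  add_assoc a b c := by ext <;> simp <;> ring
  zero_add a := by ext <;> simp
  add_zero a := by ext <;> simp
  add_comm a b := by ext <;> simp <;> ring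
  neg_add_cancel a := by ext <;> simp
  mul_assoc a b c := by ext <;> simp <;> ring
  one_mul a := by ext <;> simp
  mul_one a := by ext <;> simp
  left_distrib a b c := by ext <;> simp <;> ring
  right_distrib a b c := by ext <;> simp <;> ring
  mul_comm a b := by ext <;> simp <;> ring
  zero_mul a := by ext <;> simp
  mul_zero a := by ext <;> simp
  nsmul := nsmulRec
  zsmul := zsmulRec

/-- Euclidean norm of a bicomplex number. -/
noncomputable def enorm (Z : BC) : ℝ :=
  Real.sqrt (‖Z.z1‖ ^ 2 + ‖Z.z2‖ ^ 2)

/-- Embedding of ℂ(𝐢) into BC. -/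
def ofC (z : ℂ) : BC := ⟨z, 0⟩

/-- Embedding of ℝ into BC. -/
noncomputable def ofR (r : ℝ) : BC := ⟨(r : ℂ), 0⟩

/-- The idempotent 𝐞 = (1 + 𝐢𝐣)/2. -/
noncomputable def e : BC := ⟨1 / 2, Complex.I / 2⟩

/-- The idempotent 𝐞† = (1 - 𝐢𝐣)/2. -/
noncomputable def edag : BC := ⟨1 / 2, -(Complex.I / 2)⟩

/-- First idempotent component β₁ = z₁ - 𝐢 z₂. -/
def beta1 (Z : BC) : ℂ := Z.z1 - Complex.I * Z.z2

/-- Second idempotent component β₂ = z₁ + 𝐢 z₂. -/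
def beta2 (Z : BC) : ℂ := Z.z1 + Complex.I * Z.z2

/-- The †-conjugation. -/
def dag (Z : BC) : BC := ⟨Z.z1, -Z.z2⟩

/-- The *-conjugation. -/
def bstar (Z : BC) : BC := ⟨(starRingEnd ℂ) Z.z1, -((starRingEnd ℂ) Z.z2)⟩

/-- The set 𝔻⁺ of positive hyperbolic numbers. -/
def Dpos : Set BC :=
  {Z | ∃ ν μ : ℝ, 0 ≤ ν ∧ 0 ≤ μ ∧ Z = ofR ν * e + ofR μ * edag}

/-- Partial order induced by 𝔻⁺. -/
def hle (Z W : BC) : Prop := W - Z ∈ Dpos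

/-- Hyperbolic-valued norm |Z|ₖ = |β₁|𝐞 + |β₂|𝐞†. -/
noncomputable def hnorm (Z : BC) : BC :=
  ofR (‖beta1 Z‖) * e + ofR (‖beta2 Z‖) * edag

/-- Z is a hyperbolic number: Z = x₁ + y₂ 𝐢𝐣. -/
def isHyp (Z : BC) : Prop := Z.z1.im = 0 ∧ Z.z2.re = 0

/-! Both sides are combinations `ofR a * e + ofR b * edag`, and on such combinations `hle` is the
coordinatewise order. Since `β₁, β₂` are multiplicative and `‖β₁‖² + ‖β₂‖² = 2 (‖z₁‖² + ‖z₂‖²)`,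
each `‖βᵢ Z‖` is at most `√2 · enorm Z`, which gives both inequalities coordinatewise. -/

lemma hle_of_le {a b c d : ℝ} (hac : a ≤ c) (hbd : b ≤ d) :
    hle (ofR a * e + ofR b * edag) (ofR c * e + ofR d * edag) := by
  refine ⟨c - a, d - b, sub_nonneg.2 hac, sub_nonneg.2 hbd, ?_⟩
  ext <;> simp [ofR, e, edag, sub_eq_add_neg] <;> ring

lemma ofR_eq_mul_e_add_mul_edag (r : ℝ) : ofR r = ofR r * e + ofR r * edag := by
  ext <;> simp [ofR, e, edag]
  ring

lemma ofR_mul_mul_e_add_mul_edag (s a b : ℝ) :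
    ofR s * (ofR a * e + ofR b * edag) = ofR (s * a) * e + ofR (s * b) * edag := by
  ext <;> simp [ofR, e, edag] <;> ring

lemma beta1_mul (Z W : BC) : beta1 (Z * W) = beta1 Z * beta1 W := by
  simp only [beta1, mul_z1, mul_z2]
  linear_combination (-(Z.z2 * W.z2)) * Complex.I_sq

lemma beta2_mul (Z W : BC) : beta2 (Z * W) = beta2 Z * beta2 W := by
  simp only [beta2, mul_z1, mul_z2]
  linear_combination (-(Z.z2 * W.z2)) * Complex.I_sq

lemma norm_beta1_sq_add_norm_beta2_sq (Z : BC) :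
    ‖beta1 Z‖ ^ 2 + ‖beta2 Z‖ ^ 2 = 2 * (‖Z.z1‖ ^ 2 + ‖Z.z2‖ ^ 2) := by
  simp only [Complex.sq_norm, beta1, beta2, Complex.normSq_apply,
    Complex.sub_re, Complex.sub_im, Complex.add_re, Complex.add_im,
    Complex.mul_re, Complex.mul_im, Complex.I_re, Complex.I_im]
  ring

lemma sqrt_two_mul_enorm (Z : BC) :
    Real.sqrt 2 * enorm Z = Real.sqrt (‖beta1 Z‖ ^ 2 + ‖beta2 Z‖ ^ 2) := by
  rw [enorm, ← Real.sqrt_mul zero_le_two, norm_beta1_sq_add_norm_beta2_sq]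

lemma norm_beta1_le (Z : BC) : ‖beta1 Z‖ ≤ Real.sqrt 2 * enorm Z := by
  rw [sqrt_two_mul_enorm, Real.le_sqrt (norm_nonneg _) (by positivity)]
  exact le_add_of_nonneg_right (sq_nonneg _)

lemma norm_beta2_le (Z : BC) : ‖beta2 Z‖ ≤ Real.sqrt 2 * enorm Z := by
  rw [sqrt_two_mul_enorm, Real.le_sqrt (norm_nonneg _) (by positivity)]
  exact le_add_of_nonneg_left (sq_nonneg _)

theorem hnorm_le_sqrt_two_enorm (Z : BC) :
    hle (hnorm Z) (ofR (Real.sqrt 2 * enorm Z)) ∧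
    ∀ W : BC, hle (hnorm (Z * W)) (ofR (Real.sqrt 2 * enorm Z) * hnorm W) := by
  refine ⟨?_, fun W => ?_⟩
  · rw [hnorm, ofR_eq_mul_e_add_mul_edag (Real.sqrt 2 * enorm Z)]
    exact hle_of_le (norm_beta1_le Z) (norm_beta2_le Z)
  · rw [hnorm, hnorm, ofR_mul_mul_e_add_mul_edag, beta1_mul, beta2_mul, norm_mul, norm_mul]
    exact hle_of_le (mul_le_mul_of_nonneg_right (norm_beta1_le Z) (norm_nonneg _))
      (mul_le_mul_of_nonneg_right (norm_beta2_le Z) (norm_nonneg _))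

end BC
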